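/- The Jacobi form F satisfies the heat equation ∂F/∂τ (x,z,τ) = ∂²F/∂z∂x (x,z,τ) at every point (x,z,τ) with τ in the upper half plane, θ(x|τ) ≠ 0, and θ(2πiz|τ) ≠ 0; here ∂F/∂τ is the complex derivative of τ ↦ F(x,z,τ), and ∂²F/∂z∂x is the complex derivative in z of the complex derivative in x of F. -/

import Mathlib

open Complex Filter

/-- The Jacobi theta function `θ(z|τ) = ∑_{n∈ℤ} (−1)^n e^{iπτ(n+1/2)²} e^{z(n+1/2)}`,
here as a function of an arbitrary complex `τ` (the series converges when `Im τ > 0`). -/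
noncomputable def jTheta (z τ : ℂ) : ℂ :=
  ∑' n : ℤ, (-1 : ℂ) ^ n * Complex.exp (Real.pi * I * τ * ((n : ℂ) + 1/2) ^ 2)
    * Complex.exp (z * ((n : ℂ) + 1/2))

/-- The Jacobi form `F(x,z,τ) = 2πi θ'(0|τ) θ(x+2πiz|τ)/(θ(x|τ) θ(2πiz|τ))`. -/
noncomputable def jacobiF (x z τ : ℂ) : ℂ :=
  2 * Real.pi * I * deriv (fun w => jTheta w τ) 0 * jTheta (x + 2 * Real.pi * I * z) τ /
    (jTheta x τ * jTheta (2 * Real.pi * I * z) τ)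

/-!
Write `θ⁽ʲ⁾` for the theta series differentiated termwise `j` times in `z`.  Termwise
differentiation gives `∂_z θ⁽ʲ⁾ = θ⁽ʲ⁺¹⁾` and `∂_τ θ⁽ʲ⁾ = πi θ⁽ʲ⁺²⁾`, so with `y = 2πiz` both sides
of the heat equation for `F` are rational in the values of `θ, θ', θ'', θ'''` at `0, x, y, x + y`,
and their difference is a multiple of one cubic identity between theta values.  Multiplying out,
that identity says that a series over `ℤ⁴` vanishes; its summand changes sign under a reflection of
the lattice `(ℤ + 1/2)⁴` that fixes the exponents of the summand.
-/

lemma hasSum_mul_mul_mul {ι₁ ι₂ ι₃ ι₄ R : Type*} [NormedRing R] [CompleteSpace R]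
    {f₁ : ι₁ → R} {f₂ : ι₂ → R} {f₃ : ι₃ → R} {f₄ : ι₄ → R}
    (h₁ : Summable (‖f₁ ·‖)) (h₂ : Summable (‖f₂ ·‖)) (h₃ : Summable (‖f₃ ·‖))
    (h₄ : Summable (‖f₄ ·‖)) :
    HasSum (fun p : ι₁ × ι₂ × ι₃ × ι₄ => f₁ p.1 * (f₂ p.2.1 * (f₃ p.2.2.1 * f₄ p.2.2.2)))
      ((∑' i, f₁ i) * ((∑' i, f₂ i) * ((∑' i, f₃ i) * ∑' i, f₄ i))) := by
  have h₃₄ := h₃.mul_norm h₄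
  have h₂₃₄ := h₂.mul_norm h₃₄
  rw [tsum_mul_tsum_of_summable_norm h₃ h₄, tsum_mul_tsum_of_summable_norm h₂ h₃₄,
    tsum_mul_tsum_of_summable_norm h₁ h₂₃₄]
  exact (h₁.mul_norm h₂₃₄).of_norm.hasSum

namespace JacobiHeat

open Real Topology

noncomputable def thetaTerm (n : ℤ) (z τ : ℂ) : ℂ :=
  (-1 : ℂ) ^ n * Complex.exp (π * I * τ * ((n : ℂ) + 1/2) ^ 2) * Complex.exp (z * ((n : ℂ) + 1/2))

noncomputable def jThetaDeriv (j : ℕ) (z τ : ℂ) : ℂ :=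
  ∑' n : ℤ, ((n : ℂ) + 1/2) ^ j * thetaTerm n z τ

lemma jTheta_eq_jThetaDeriv_zero (z τ : ℂ) : jTheta z τ = jThetaDeriv 0 z τ := by
  simp only [jTheta, jThetaDeriv, thetaTerm, pow_zero, one_mul]

lemma norm_thetaTerm (n : ℤ) (z τ : ℂ) :
    ‖thetaTerm n z τ‖ = rexp (-π * τ.im * ((n : ℝ) + 1/2) ^ 2 + z.re * ((n : ℝ) + 1/2)) := by
  have hcast : ((n : ℂ) + 1/2) = (((n : ℝ) + 1/2 : ℝ) : ℂ) := by push_cast; ring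
  rw [thetaTerm, hcast, norm_mul, norm_mul, norm_zpow, norm_neg, norm_one, one_zpow, one_mul,
    Complex.norm_exp, Complex.norm_exp, ← Real.exp_add]
  congr 1
  simp only [mul_re, mul_im, ofReal_re, ofReal_im, I_re, I_im, ← ofReal_pow]
  ring

lemma norm_thetaTerm_eq_mul_norm_jacobiTheta₂_term (n : ℤ) (z τ : ℂ) :
    ‖thetaTerm n z τ‖ = rexp (-π * τ.im / 4 + z.re / 2) *
      ‖jacobiTheta₂_term n (((τ.im / 2 - z.re / (2 * π) : ℝ) : ℂ) * I) τ‖ := by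
  rw [norm_thetaTerm, norm_jacobiTheta₂_term, ← Real.exp_add]
  congr 1
  simp only [mul_im, ofReal_re, ofReal_im, I_re, I_im]
  field_simp
  ring

lemma summable_norm_thetaTerm (z : ℂ) {τ : ℂ} (hτ : 0 < τ.im) :
    Summable fun n : ℤ => ‖thetaTerm n z τ‖ := by
  simp_rw [norm_thetaTerm_eq_mul_norm_jacobiTheta₂_term]
  exact (summable_norm_iff.mpr ((summable_jacobiTheta₂_term_iff _ _).mpr hτ)).mul_left _

/-- With `x = n + 1/2`: the weight `|x| ^ j` is absorbed into `j! e^{|x|}`, and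
`e^{(R + 1)|x|} ≤ e^{(R + 1)x} + e^{-(R + 1)x}`. -/
lemma norm_pow_mul_thetaTerm_le (j : ℕ) (n : ℤ) {z τ : ℂ} {R T : ℝ} (hz : |z.re| ≤ R)
    (hτ : T ≤ τ.im) :
    ‖((n : ℂ) + 1/2) ^ j * thetaTerm n z τ‖ ≤
      j.factorial * (‖thetaTerm n (R + 1 : ℝ) (T * I)‖ + ‖thetaTerm n (-(R + 1) : ℝ) (T * I)‖) := by
  set x : ℝ := (n : ℝ) + 1/2
  have hx : ‖(n : ℂ) + 1/2‖ = |x| := by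
    rw [show (n : ℂ) + 1/2 = ((x : ℝ) : ℂ) by push_cast [x]; ring, Complex.norm_real, norm_eq_abs]
  have hpow : |x| ^ j ≤ j.factorial * rexp |x| := by
    have := Real.pow_div_factorial_le_exp |x| (abs_nonneg x) j
    rwa [div_le_iff₀' (by positivity)] at this
  have hexp : -π * τ.im * x ^ 2 + z.re * x ≤ -π * T * x ^ 2 + R * |x| := by
    have hquad : -π * τ.im * x ^ 2 ≤ -π * T * x ^ 2 := by
      nlinarith [mul_nonneg (sub_nonneg.mpr hτ) (mul_nonneg pi_pos.le (sq_nonneg x))]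
    have hlin : z.re * x ≤ R * |x| := (le_abs_self _).trans <| by
      rw [abs_mul]; exact mul_le_mul_of_nonneg_right hz (abs_nonneg x)
    linarith
  have hsplit : rexp (|x| + (-π * T * x ^ 2 + R * |x|)) ≤
      rexp (-π * T * x ^ 2 + (R + 1) * x) + rexp (-π * T * x ^ 2 + -(R + 1) * x) := by
    rcases abs_choice x with h | h <;> rw [h]
    · exact le_add_of_le_of_nonneg (le_of_eq (by ring_nf)) (exp_nonneg _)
    · exact le_add_of_nonneg_of_le (exp_nonneg _) (le_of_eq (by ring_nf))
  have hmajorant : ‖thetaTerm n (R + 1 : ℝ) (T * I)‖ + ‖thetaTerm n (-(R + 1) : ℝ) (T * I)‖ =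
      rexp (-π * T * x ^ 2 + (R + 1) * x) + rexp (-π * T * x ^ 2 + -(R + 1) * x) := by
    simp only [norm_thetaTerm, mul_im, ofReal_re, ofReal_im, I_re, I_im, x]
    ring_nf
  rw [norm_mul, norm_pow, hx, norm_thetaTerm, hmajorant]
  calc |x| ^ j * rexp (-π * τ.im * x ^ 2 + z.re * x)
      ≤ (j.factorial * rexp |x|) * rexp (-π * T * x ^ 2 + R * |x|) :=
        mul_le_mul hpow (exp_le_exp.mpr hexp) (exp_nonneg _) (by positivity)
    _ = j.factorial * rexp (|x| + (-π * T * x ^ 2 + R * |x|)) := by rw [Real.exp_add |x|]; ring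
    _ ≤ _ := by gcongr

lemma summable_thetaTerm_majorant (j : ℕ) {T : ℝ} (hT : 0 < T) (R : ℝ) :
    Summable fun n : ℤ => (j.factorial : ℝ) *
      (‖thetaTerm n (R + 1 : ℝ) (T * I)‖ + ‖thetaTerm n (-(R + 1) : ℝ) (T * I)‖) := by
  have hT' : 0 < (T * I).im := by simpa using hT
  exact ((summable_norm_thetaTerm _ hT').add (summable_norm_thetaTerm _ hT')).mul_left _

lemma hasDerivAt_thetaTerm_left (n : ℤ) (z τ : ℂ) :
    HasDerivAt (thetaTerm n · τ) (((n : ℂ) + 1/2) * thetaTerm n z τ) z := by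
  have := ((hasDerivAt_mul_const ((n : ℂ) + 1/2)).cexp).const_mul
    ((-1 : ℂ) ^ n * Complex.exp (π * I * τ * ((n : ℂ) + 1/2) ^ 2)) (x := z)
  exact this.congr_deriv (by unfold thetaTerm; ring)

lemma hasDerivAt_thetaTerm_right (n : ℤ) (z τ : ℂ) :
    HasDerivAt (thetaTerm n z ·) (π * I * ((n : ℂ) + 1/2) ^ 2 * thetaTerm n z τ) τ := by
  have := ((((hasDerivAt_id' τ).const_mul (π * I : ℂ)).mul_const (((n : ℂ) + 1/2) ^ 2)).cexp
    |>.const_mul ((-1 : ℂ) ^ n)).mul_const (Complex.exp (z * ((n : ℂ) + 1/2)))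
  exact this.congr_deriv (by unfold thetaTerm; ring)

lemma summable_norm_pow_mul_thetaTerm (j : ℕ) (z : ℂ) {τ : ℂ} (hτ : 0 < τ.im) :
    Summable fun n : ℤ => ‖((n : ℂ) + 1/2) ^ j * thetaTerm n z τ‖ :=
  (summable_thetaTerm_majorant j hτ |z.re|).of_nonneg_of_le (fun _ => norm_nonneg _)
    fun n => norm_pow_mul_thetaTerm_le j n le_rfl le_rfl

lemma hasDerivAt_jThetaDeriv_left (j : ℕ) (z : ℂ) {τ : ℂ} (hτ : 0 < τ.im) :
    HasDerivAt (jThetaDeriv j · τ) (jThetaDeriv (j + 1) z τ) z := by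
  have hre : ∀ w ∈ Metric.ball z 1, |w.re| ≤ |z.re| + 1 := fun w hw => by
    have := (abs_re_le_norm (w - z)).trans (mem_ball_iff_norm.mp hw).le
    rw [sub_re] at this
    linarith [abs_sub_abs_le_abs_sub w.re z.re]
  refine hasDerivAt_tsum_of_isPreconnected (summable_thetaTerm_majorant (j + 1) hτ (|z.re| + 1))
    Metric.isOpen_ball (convex_ball z 1).isPreconnected (fun n w _ => ?_)
    (fun n w hw => norm_pow_mul_thetaTerm_le (j + 1) n (hre w hw) le_rfl)
    (Metric.mem_ball_self one_pos) (summable_norm_pow_mul_thetaTerm j z hτ).of_norm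
    (Metric.mem_ball_self one_pos)
  exact ((hasDerivAt_thetaTerm_left n w τ).const_mul _).congr_deriv (by ring)

lemma hasDerivAt_jThetaDeriv_right (j : ℕ) (z : ℂ) {τ : ℂ} (hτ : 0 < τ.im) :
    HasDerivAt (jThetaDeriv j z ·) (π * I * jThetaDeriv (j + 2) z τ) τ := by
  have hτ2 : 0 < τ.im / 2 := half_pos hτ
  have him : ∀ t ∈ Metric.ball τ (τ.im / 2), τ.im / 2 ≤ t.im := fun t ht => by
    have := (abs_im_le_norm (t - τ)).trans (mem_ball_iff_norm.mp ht).le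
    rw [sub_im] at this
    linarith [neg_abs_le (t.im - τ.im)]
  have hnorm : ‖(π * I : ℂ)‖ = π := by simp [abs_of_pos pi_pos]
  have := hasDerivAt_tsum_of_isPreconnected
    ((summable_thetaTerm_majorant (j + 2) hτ2 |z.re|).mul_left π)
    Metric.isOpen_ball (convex_ball τ (τ.im / 2)).isPreconnected
    (g := fun (n : ℤ) t => ((n : ℂ) + 1/2) ^ j * thetaTerm n z t)
    (g' := fun (n : ℤ) t => π * I * (((n : ℂ) + 1/2) ^ (j + 2) * thetaTerm n z t))
    (fun n t _ => ((hasDerivAt_thetaTerm_right n z t).const_mul _).congr_deriv (by ring))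
    (fun n t ht => by
      rw [norm_mul, hnorm]
      exact mul_le_mul_of_nonneg_left (norm_pow_mul_thetaTerm_le (j + 2) n le_rfl (him t ht))
        pi_pos.le)
    (Metric.mem_ball_self hτ2) (summable_norm_pow_mul_thetaTerm j z hτ).of_norm
    (Metric.mem_ball_self hτ2)
  rwa [tsum_mul_left] at this

/-- Reflection of `(l, k, m, n) + 1/2` in the hyperplane orthogonal to `(1, 1, -1, -1)` or to
`(1, -1, 1, 1)`, whichever keeps it in `(ℤ + 1/2)⁴`.  Both vectors are orthogonal to `(0, 1, 1, 0)`
and `(0, 1, 0, 1)`, so `quadTerm` is invariant, while `cubicWeight` changes sign. -/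
def reflect : ℤ × ℤ × ℤ × ℤ → ℤ × ℤ × ℤ × ℤ
  | (l, k, m, n) =>
    if (l + k + m + n) % 2 = 0 then
      let h := (l + k - m - n) / 2
      (l - h, k - h, m + h, n + h)
    else
      let h := (l - k + m + n + 1) / 2
      (l - h, k + h, m - h, n - h)

lemma reflect_cases (l k m n : ℤ) : ∃ h : ℤ,
    (l + k - m - n = 2 * h ∧ reflect (l, k, m, n) = (l - h, k - h, m + h, n + h)) ∨
      (l - k + m + n + 1 = 2 * h ∧ reflect (l, k, m, n) = (l - h, k + h, m - h, n - h)) := by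
  by_cases hpar : (l + k + m + n) % 2 = 0
  · exact ⟨(l + k - m - n) / 2, .inl ⟨by omega, by simp [reflect, hpar]⟩⟩
  · exact ⟨(l - k + m + n + 1) / 2, .inr ⟨by omega, by simp [reflect, hpar]⟩⟩

lemma reflect_involutive : Function.Involutive reflect := by
  rintro ⟨l, k, m, n⟩
  obtain ⟨h, ⟨hh, hr⟩ | ⟨hh, hr⟩⟩ := reflect_cases l k m n <;> rw [hr] <;>
    obtain ⟨h', ⟨hh', hr'⟩ | ⟨hh', hr'⟩⟩ := reflect_cases .. <;> rw [hr'] <;>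
    simp only [Prod.mk.injEq] <;> omega

noncomputable def quadTerm (τ u v : ℂ) (p : ℤ × ℤ × ℤ × ℤ) : ℂ :=
  thetaTerm p.1 0 τ * (thetaTerm p.2.1 (u + v) τ * (thetaTerm p.2.2.1 u τ * thetaTerm p.2.2.2 v τ))

/-- `a ((b - c - d)² - a²)` for `(a, b, c, d) = p + 1/2`; expanding `(b - c - d)²` produces the
six products on the left of `jThetaDeriv_cubic_identity`. -/
noncomputable def cubicWeight (p : ℤ × ℤ × ℤ × ℤ) : ℂ :=
  ((p.1 : ℂ) + 1/2) * ((((p.2.1 : ℂ) + 1/2) - ((p.2.2.1 : ℂ) + 1/2) - ((p.2.2.2 : ℂ) + 1/2)) ^ 2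
    - ((p.1 : ℂ) + 1/2) ^ 2)

lemma quadTerm_eq (τ u v : ℂ) (l k m n : ℤ) :
    quadTerm τ u v (l, k, m, n) = (-1 : ℂ) ^ (l + k + m + n) * Complex.exp
      (π * I * τ * (((l : ℂ) + 1/2) ^ 2 + ((k : ℂ) + 1/2) ^ 2 + ((m : ℂ) + 1/2) ^ 2
        + ((n : ℂ) + 1/2) ^ 2) + u * ((k : ℂ) + m + 1) + v * ((k : ℂ) + n + 1)) := by
  have hne : (-1 : ℂ) ≠ 0 := by norm_num
  rw [show π * I * τ * (((l : ℂ) + 1/2) ^ 2 + ((k : ℂ) + 1/2) ^ 2 + ((m : ℂ) + 1/2) ^ 2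
        + ((n : ℂ) + 1/2) ^ 2) + u * ((k : ℂ) + m + 1) + v * ((k : ℂ) + n + 1)
      = π * I * τ * ((l : ℂ) + 1/2) ^ 2 + 0 * ((l : ℂ) + 1/2)
        + (π * I * τ * ((k : ℂ) + 1/2) ^ 2 + (u + v) * ((k : ℂ) + 1/2))
        + (π * I * τ * ((m : ℂ) + 1/2) ^ 2 + u * ((m : ℂ) + 1/2))
        + (π * I * τ * ((n : ℂ) + 1/2) ^ 2 + v * ((n : ℂ) + 1/2)) by ring]
  simp only [quadTerm, thetaTerm, zpow_add₀ hne, Complex.exp_add]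
  ring

lemma quadTerm_reflect (τ u v : ℂ) (p : ℤ × ℤ × ℤ × ℤ) :
    quadTerm τ u v (reflect p) = quadTerm τ u v p := by
  obtain ⟨l, k, m, n⟩ := p
  obtain ⟨h, ⟨hh, hr⟩ | ⟨hh, hr⟩⟩ := reflect_cases l k m n <;>
    have hc := congrArg (Int.cast : ℤ → ℂ) hh <;> push_cast at hc <;>
    rw [hr, quadTerm_eq, quadTerm_eq]
  · congr 2
    · ring
    · push_cast
      linear_combination (-2 * h * π * I * τ) * hc
  · rw [show l - h + (k + h) + (m - h) + (n - h) = l + k + m + n + 2 * (-h) by ring,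
      zpow_add₀ (by norm_num), (even_two_mul _).neg_one_zpow, mul_one]
    congr 2
    push_cast
    linear_combination (-2 * h * π * I * τ) * hc

lemma cubicWeight_reflect (p : ℤ × ℤ × ℤ × ℤ) : cubicWeight (reflect p) = -cubicWeight p := by
  obtain ⟨l, k, m, n⟩ := p
  obtain ⟨h, ⟨hh, hr⟩ | ⟨hh, hr⟩⟩ := reflect_cases l k m n <;>
    have hc := congrArg (Int.cast : ℤ → ℂ) hh <;> push_cast at hc <;>
    rw [hr] <;> simp only [cubicWeight] <;> push_cast
  · linear_combination (4 * h ^ 2 - ((l : ℂ) + k - m - n) * h - 2 * ((l : ℂ) + 1/2) ^ 2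
      + 2 * ((l : ℂ) + 1/2) * ((k : ℂ) - m - n - 1/2)) * hc
  · linear_combination (4 * h ^ 2 - ((l : ℂ) - k + m + n + 1) * h - 2 * ((l : ℂ) + 1/2) ^ 2
      - 2 * ((l : ℂ) + 1/2) * ((k : ℂ) - m - n - 1/2)) * hc

lemma hasSum_monomial_mul_quadTerm {τ : ℂ} (hτ : 0 < τ.im) (u v : ℂ) (α β γ δ : ℕ) :
    HasSum (fun p : ℤ × ℤ × ℤ × ℤ => ((p.1 : ℂ) + 1/2) ^ α * ((p.2.1 : ℂ) + 1/2) ^ β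
        * ((p.2.2.1 : ℂ) + 1/2) ^ γ * ((p.2.2.2 : ℂ) + 1/2) ^ δ * quadTerm τ u v p)
      (jThetaDeriv α 0 τ * (jThetaDeriv β (u + v) τ * (jThetaDeriv γ u τ * jThetaDeriv δ v τ))) :=
  (hasSum_mul_mul_mul (summable_norm_pow_mul_thetaTerm α 0 hτ)
    (summable_norm_pow_mul_thetaTerm β (u + v) hτ) (summable_norm_pow_mul_thetaTerm γ u hτ)
    (summable_norm_pow_mul_thetaTerm δ v hτ)).congr_fun fun p => by simp only [quadTerm]; ring

lemma tsum_cubicWeight_mul_quadTerm {τ : ℂ} (hτ : 0 < τ.im) (u v : ℂ) :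
    ∑' p, cubicWeight p * quadTerm τ u v p =
      jThetaDeriv 1 0 τ * (jThetaDeriv 2 (u + v) τ * jThetaDeriv 0 u τ * jThetaDeriv 0 v τ
        - 2 * jThetaDeriv 1 (u + v) τ * jThetaDeriv 1 u τ * jThetaDeriv 0 v τ
        - 2 * jThetaDeriv 1 (u + v) τ * jThetaDeriv 0 u τ * jThetaDeriv 1 v τ
        + 2 * jThetaDeriv 0 (u + v) τ * jThetaDeriv 1 u τ * jThetaDeriv 1 v τ
        + jThetaDeriv 0 (u + v) τ * jThetaDeriv 2 u τ * jThetaDeriv 0 v τ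
        + jThetaDeriv 0 (u + v) τ * jThetaDeriv 0 u τ * jThetaDeriv 2 v τ)
      - jThetaDeriv 3 0 τ * jThetaDeriv 0 (u + v) τ * jThetaDeriv 0 u τ * jThetaDeriv 0 v τ := by
  have mono := hasSum_monomial_mul_quadTerm hτ u v
  have H := (((((((mono 1 2 0 0).sub ((mono 1 1 1 0).mul_left 2)).sub
    ((mono 1 1 0 1).mul_left 2)).add ((mono 1 0 1 1).mul_left 2)).add (mono 1 0 2 0)).add
    (mono 1 0 0 2)).sub (mono 3 0 0 0)).congr_fun
    (g := fun p => cubicWeight p * quadTerm τ u v p) fun p => by simp only [cubicWeight]; ring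
  exact H.tsum_eq.trans (by ring)

lemma tsum_cubicWeight_mul_quadTerm_eq_zero (τ u v : ℂ) :
    ∑' p, cubicWeight p * quadTerm τ u v p = 0 := by
  have h := reflect_involutive.toPerm.tsum_eq (fun p => cubicWeight p * quadTerm τ u v p)
  simp only [Function.Involutive.coe_toPerm, cubicWeight_reflect, quadTerm_reflect, neg_mul,
    tsum_neg] at h
  linear_combination -h / 2

theorem jThetaDeriv_cubic_identity {τ : ℂ} (hτ : 0 < τ.im) (u v : ℂ) :
    jThetaDeriv 1 0 τ * (jThetaDeriv 2 (u + v) τ * jThetaDeriv 0 u τ * jThetaDeriv 0 v τ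
        - 2 * jThetaDeriv 1 (u + v) τ * jThetaDeriv 1 u τ * jThetaDeriv 0 v τ
        - 2 * jThetaDeriv 1 (u + v) τ * jThetaDeriv 0 u τ * jThetaDeriv 1 v τ
        + 2 * jThetaDeriv 0 (u + v) τ * jThetaDeriv 1 u τ * jThetaDeriv 1 v τ
        + jThetaDeriv 0 (u + v) τ * jThetaDeriv 2 u τ * jThetaDeriv 0 v τ
        + jThetaDeriv 0 (u + v) τ * jThetaDeriv 0 u τ * jThetaDeriv 2 v τ)
      = jThetaDeriv 3 0 τ * jThetaDeriv 0 (u + v) τ * jThetaDeriv 0 u τ * jThetaDeriv 0 v τ :=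
  sub_eq_zero.mp <|
    (tsum_cubicWeight_mul_quadTerm hτ u v).symm.trans (tsum_cubicWeight_mul_quadTerm_eq_zero τ u v)

lemma deriv_jTheta_zero {τ : ℂ} (hτ : 0 < τ.im) :
    deriv (fun w => jTheta w τ) 0 = jThetaDeriv 1 0 τ := by
  simp only [jTheta_eq_jThetaDeriv_zero]
  exact (hasDerivAt_jThetaDeriv_left 0 0 hτ).deriv

lemma jacobiF_eq {τ : ℂ} (hτ : 0 < τ.im) (x z : ℂ) :
    jacobiF x z τ = 2 * π * I * jThetaDeriv 1 0 τ * jThetaDeriv 0 (x + 2 * π * I * z) τ /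
      (jThetaDeriv 0 x τ * jThetaDeriv 0 (2 * π * I * z) τ) := by
  rw [jacobiF, deriv_jTheta_zero hτ]
  simp only [jTheta_eq_jThetaDeriv_zero]

lemma deriv_jacobiF_right {x z τ : ℂ} (hτ : 0 < τ.im) (hx : jThetaDeriv 0 x τ ≠ 0)
    (hz : jThetaDeriv 0 (2 * π * I * z) τ ≠ 0) :
    deriv (jacobiF x z ·) τ = 2 * π * I * (π * I) *
      ((jThetaDeriv 3 0 τ * jThetaDeriv 0 (x + 2 * π * I * z) τ
          + jThetaDeriv 1 0 τ * jThetaDeriv 2 (x + 2 * π * I * z) τ)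
          * (jThetaDeriv 0 x τ * jThetaDeriv 0 (2 * π * I * z) τ)
        - jThetaDeriv 1 0 τ * jThetaDeriv 0 (x + 2 * π * I * z) τ
          * (jThetaDeriv 2 x τ * jThetaDeriv 0 (2 * π * I * z) τ
            + jThetaDeriv 0 x τ * jThetaDeriv 2 (2 * π * I * z) τ))
      / (jThetaDeriv 0 x τ * jThetaDeriv 0 (2 * π * I * z) τ) ^ 2 := by
  have heq : (jacobiF x z ·) =ᶠ[𝓝 τ] fun t => 2 * π * I * jThetaDeriv 1 0 t *
      jThetaDeriv 0 (x + 2 * π * I * z) t / (jThetaDeriv 0 x t * jThetaDeriv 0 (2 * π * I * z) t) :=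
    eventually_of_mem ((isOpen_lt continuous_const continuous_im).mem_nhds hτ)
      fun t ht => jacobiF_eq ht x z
  have hθ := fun j w => hasDerivAt_jThetaDeriv_right j w hτ
  refine heq.deriv_eq.trans <| ((((hθ 1 0).const_mul (2 * π * I : ℂ)).fun_mul (hθ 0 _)).fun_div
    ((hθ 0 x).fun_mul (hθ 0 _)) (mul_ne_zero hx hz)).deriv.trans ?_
  ring

lemma deriv_jacobiF_left {x τ : ℂ} (hτ : 0 < τ.im) (hx : jThetaDeriv 0 x τ ≠ 0) (w : ℂ) :
    deriv (jacobiF · w τ) x = 2 * π * I * jThetaDeriv 1 0 τ / jThetaDeriv 0 (2 * π * I * w) τ *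
      ((jThetaDeriv 1 (x + 2 * π * I * w) τ * jThetaDeriv 0 x τ
        - jThetaDeriv 0 (x + 2 * π * I * w) τ * jThetaDeriv 1 x τ) / jThetaDeriv 0 x τ ^ 2) := by
  have hfun : (jacobiF · w τ) = fun u =>
      2 * π * I * jThetaDeriv 1 0 τ / jThetaDeriv 0 (2 * π * I * w) τ *
        (jThetaDeriv 0 (u + 2 * π * I * w) τ / jThetaDeriv 0 u τ) := by
    funext u
    rw [jacobiF_eq hτ]
    ring
  rw [hfun]
  exact (((hasDerivAt_jThetaDeriv_left 0 _ hτ).comp_add_const x _).fun_div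
    (hasDerivAt_jThetaDeriv_left 0 x hτ) hx |>.const_mul _).deriv

lemma deriv_deriv_jacobiF_left {x z τ : ℂ} (hτ : 0 < τ.im) (hx : jThetaDeriv 0 x τ ≠ 0)
    (hz : jThetaDeriv 0 (2 * π * I * z) τ ≠ 0) :
    deriv (fun w => deriv (jacobiF · w τ) x) z = (2 * π * I) ^ 2 * jThetaDeriv 1 0 τ *
      ((jThetaDeriv 2 (x + 2 * π * I * z) τ * jThetaDeriv 0 x τ
          - jThetaDeriv 1 (x + 2 * π * I * z) τ * jThetaDeriv 1 x τ)
          * jThetaDeriv 0 (2 * π * I * z) τ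
        - (jThetaDeriv 1 (x + 2 * π * I * z) τ * jThetaDeriv 0 x τ
          - jThetaDeriv 0 (x + 2 * π * I * z) τ * jThetaDeriv 1 x τ)
          * jThetaDeriv 1 (2 * π * I * z) τ)
      / (jThetaDeriv 0 x τ ^ 2 * jThetaDeriv 0 (2 * π * I * z) τ ^ 2) := by
  have hscale : HasDerivAt (fun w : ℂ => 2 * π * I * w) (2 * π * I) z := by
    simpa using (hasDerivAt_id z).const_mul (2 * π * I : ℂ)
  have hθ (j : ℕ) (a : ℂ) : HasDerivAt (fun w => jThetaDeriv j (a + 2 * π * I * w) τ)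
      (jThetaDeriv (j + 1) (a + 2 * π * I * z) τ * (2 * π * I)) z :=
    (hasDerivAt_jThetaDeriv_left j _ hτ).comp z (hscale.const_add a)
  have hθ₀ : HasDerivAt (fun w => jThetaDeriv 0 (2 * π * I * w) τ)
      (jThetaDeriv 1 (2 * π * I * z) τ * (2 * π * I)) z :=
    (hasDerivAt_jThetaDeriv_left 0 _ hτ).comp z hscale
  simp only [deriv_jacobiF_left hτ hx]
  refine (((hasDerivAt_const z _).fun_div hθ₀ hz).fun_mul
    ((((hθ 1 x).mul_const _).fun_sub ((hθ 0 x).mul_const _)).div_const _)).deriv.trans ?_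
  field_simp
  ring

end JacobiHeat

open JacobiHeat

/-- The heat equation for the Jacobi form: `∂F/∂τ(x,z,τ) = ∂²F/∂z∂x(x,z,τ)` at every point
with `Im τ > 0`, `θ(x|τ) ≠ 0` and `θ(2πiz|τ) ≠ 0`. -/
theorem jacobiF_heat (x z τ : ℂ) (hτ : 0 < τ.im)
    (hx : jTheta x τ ≠ 0) (hz : jTheta (2 * Real.pi * I * z) τ ≠ 0) :
    deriv (fun t : ℂ => jacobiF x z t) τ
      = deriv (fun w : ℂ => deriv (fun u : ℂ => jacobiF u w τ) x) z := by
  rw [jTheta_eq_jThetaDeriv_zero] at hx hz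
  rw [deriv_jacobiF_right hτ hx hz, deriv_deriv_jacobiF_left hτ hx hz]
  field_simp
  linear_combination -jThetaDeriv_cubic_identity hτ x (2 * Real.pi * I * z)
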